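/- (Greedy 1/2-approximation for matroid-constrained monotone submodular maximization) Let f : 2^S → ℝ≥0 be a monotone nondecreasing submodular function with f(∅) = 0, and let M = (S, I) be a matroid. The greedy algorithm, which starts from ∅ and repeatedly adds an element with maximum nonnegative marginal gain while preserving independence, returns a set X_g ∈ I with f(X_g) ≥ (1/2) · max{f(X) : X ∈ I}. -/
import Mathlib

/-- Greedy 1/2-approximation for matroid-constrained monotone submodular
maximization.  The greedy run is encoded as a duplicate-free list `l`: at each
step the chosen element is feasible, has positive marginal gain, and maximizes
the marginal gain among feasible elements; at termination no feasible element
with positive marginal gain remains.  Then the greedy output `l.toFinset` is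
independent and achieves at least half of the optimum. -/
theorem greedy_half_approximation {α : Type*} [DecidableEq α]
    (S : Finset α) (f : Finset α → ℝ) (Ind : Finset α → Prop)
    (hf0 : f ∅ = 0)
    (hnonneg : ∀ X : Finset α, X ⊆ S → 0 ≤ f X)
    (hmono : ∀ A B : Finset α, A ⊆ B → f A ≤ f B)
    (hsub : ∀ A B : Finset α, f (A ∪ B) + f (A ∩ B) ≤ f A + f B)
    (hIempty : Ind ∅)
    (hIdown : ∀ A B : Finset α, Ind B → A ⊆ B → Ind A)
    (hIexch : ∀ A B : Finset α, Ind A → Ind B → A.card < B.card →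
      ∃ b ∈ B \ A, Ind (insert b A))
    (hIsub : ∀ X : Finset α, Ind X → X ⊆ S)
    (l : List α) (hnodup : l.Nodup)
    (hstep : ∀ k (hk : k < l.length),
      l.get ⟨k, hk⟩ ∈ S ∧
      l.get ⟨k, hk⟩ ∉ (l.take k).toFinset ∧
      Ind (insert (l.get ⟨k, hk⟩) (l.take k).toFinset) ∧
      0 < f (insert (l.get ⟨k, hk⟩) (l.take k).toFinset) - f (l.take k).toFinset ∧
      ∀ t ∈ S, t ∉ (l.take k).toFinset → Ind (insert t (l.take k).toFinset) →
        f (insert t (l.take k).toFinset) - f (l.take k).toFinset ≤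
          f (insert (l.get ⟨k, hk⟩) (l.take k).toFinset) - f (l.take k).toFinset)
    (hterm : ∀ t ∈ S, t ∉ l.toFinset →
      ¬ (Ind (insert t l.toFinset) ∧ 0 < f (insert t l.toFinset) - f l.toFinset)) :
    Ind l.toFinset ∧ ∀ X : Finset α, Ind X → f X ≤ 2 * f l.toFinset := by
  classical
  -- basic facts about prefixes
  have hG0 : (l.take 0).toFinset = (∅ : Finset α) := by simp
  have hGk : (l.take l.length).toFinset = l.toFinset := by simp
  have hGsucc : ∀ i (hi : i < l.length),
      (l.take (i+1)).toFinset = insert (l.get ⟨i, hi⟩) (l.take i).toFinset := by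
    intro i hi
    rw [List.take_succ]
    have h : l[i]? = some (l.get ⟨i, hi⟩) := by
      rw [List.getElem?_eq_getElem hi]; rfl
    rw [h, Option.toList_some, List.toFinset_append, List.toFinset_cons, List.toFinset_nil,
      Finset.union_comm, Finset.insert_union, Finset.empty_union]
  have hGmono : ∀ {i j : ℕ}, i ≤ j → (l.take i).toFinset ⊆ (l.take j).toFinset := by
    intro i j hij x hx
    rw [List.mem_toFinset] at hx ⊢
    have h1 : l.take i = (l.take j).take i := by
      rw [List.take_take, min_eq_left hij]
    rw [h1] at hx
    exact List.take_subset _ _ hx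
  have hGcard : ∀ i, i ≤ l.length → ((l.take i).toFinset).card = i := by
    intro i hi
    have hnd : (l.take i).Nodup := (List.take_sublist i l).nodup hnodup
    rw [List.toFinset_card_of_nodup hnd, List.length_take, min_eq_left hi]
  have hGInd : ∀ i, i ≤ l.length → Ind (l.take i).toFinset := by
    intro i
    induction i with
    | zero => intro _; rw [hG0]; exact hIempty
    | succ n ih =>
      intro h
      have hn : n < l.length := h
      rw [hGsucc n hn]
      exact (hstep n hn).2.2.1
  -- submodular marginal-gain monotonicity
  have hmarg : ∀ (A B : Finset α) (x : α), A ⊆ B → x ∉ B →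
      f (insert x B) - f B ≤ f (insert x A) - f A := by
    intro A B x hAB hxB
    have h1 : insert x A ∪ B = insert x B := by
      rw [Finset.insert_union, Finset.union_eq_right.mpr hAB]
    have h2 : insert x A ∩ B = A := by
      ext y
      simp only [Finset.mem_inter, Finset.mem_insert]
      constructor
      · rintro ⟨(rfl | hyA), hyB⟩
        · exact absurd hyB hxB
        · exact hyA
      · intro hyA; exact ⟨Or.inr hyA, hAB hyA⟩
    have h3 := hsub (insert x A) B
    rw [h1, h2] at h3
    linarith
  -- union bound via submodularity
  have hunion : ∀ T : Finset α, (∀ x ∈ T, x ∉ l.toFinset) →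
      f (l.toFinset ∪ T) ≤ f l.toFinset +
        ∑ x ∈ T, (f (insert x l.toFinset) - f l.toFinset) := by
    intro T
    induction T using Finset.induction_on with
    | empty => intro _; simp
    | @insert a T' ha ih =>
      intro hT
      have haG : a ∉ l.toFinset := hT a (Finset.mem_insert_self a T')
      have h1 : l.toFinset ∪ insert a T' = insert a (l.toFinset ∪ T') := by
        rw [Finset.union_insert]
      have h2 : a ∉ l.toFinset ∪ T' := by
        rw [Finset.mem_union]; rintro (h | h)
        · exact haG h
        · exact ha h
      have h3 := hmarg l.toFinset (l.toFinset ∪ T') a Finset.subset_union_left h2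
      have h4 := ih (fun x hx => hT x (Finset.mem_insert_of_mem hx))
      rw [h1, Finset.sum_insert ha]
      linarith
  -- independence of greedy output
  have hGkInd : Ind l.toFinset := by
    have := hGInd l.length le_rfl
    rwa [hGk] at this
  refine ⟨hGkInd, ?_⟩
  intro X hX
  have hXS : X ⊆ S := hIsub X hX
  -- the "spanned" sets D i
  set D : ℕ → Finset α :=
    fun i => X.filter (fun x => x ∈ (l.take i).toFinset ∨ ¬ Ind (insert x (l.take i).toFinset))
    with hD
  have hDcard : ∀ i, i ≤ l.length → (D i).card ≤ i := by
    intro i hi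
    by_contra h
    push_neg at h
    have hDInd : Ind (D i) := hIdown _ X hX (Finset.filter_subset _ _)
    have hGi : Ind (l.take i).toFinset := hGInd i hi
    have hcard : ((l.take i).toFinset).card < (D i).card := by
      rw [hGcard i hi]; exact h
    obtain ⟨b, hb, hbi⟩ := hIexch _ _ hGi hDInd hcard
    rw [Finset.mem_sdiff] at hb
    obtain ⟨hbD, hbG⟩ := hb
    rcases (Finset.mem_filter.mp hbD).2 with h1 | h1
    · exact hbG h1
    · exact h1 hbi
  have hDmono : ∀ {i j : ℕ}, i ≤ j → D i ⊆ D j := by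
    intro i j hij x hx
    rw [hD] at hx ⊢
    rw [Finset.mem_filter] at hx ⊢
    refine ⟨hx.1, ?_⟩
    rcases hx.2 with h1 | h1
    · exact Or.inl (hGmono hij h1)
    · right
      intro h2
      exact h1 (hIdown _ _ h2 (Finset.insert_subset_insert _ (hGmono hij)))
  -- the main estimate via submodularity
  have hXunion : f X ≤ f l.toFinset +
      ∑ x ∈ X \ l.toFinset, (f (insert x l.toFinset) - f l.toFinset) := by
    have h1 : X ⊆ l.toFinset ∪ (X \ l.toFinset) := by
      intro x hx
      by_cases h : x ∈ l.toFinset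
      · exact Finset.mem_union_left _ h
      · exact Finset.mem_union_right _ (Finset.mem_sdiff.mpr ⟨hx, h⟩)
    have h2 := hmono X _ h1
    have h3 := hunion (X \ l.toFinset) (fun x hx => (Finset.mem_sdiff.mp hx).2)
    linarith
  have hsplit := Finset.sum_filter_add_sum_filter_not (X \ l.toFinset)
    (fun x => Ind (insert x l.toFinset))
    (fun x => f (insert x l.toFinset) - f l.toFinset)
  -- feasible leftovers have nonpositive gain
  have hA : ∑ x ∈ (X \ l.toFinset).filter (fun x => Ind (insert x l.toFinset)),
      (f (insert x l.toFinset) - f l.toFinset) ≤ 0 := by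
    apply Finset.sum_nonpos
    intro x hx
    rw [Finset.mem_filter, Finset.mem_sdiff] at hx
    obtain ⟨⟨hxX, hxG⟩, hxI⟩ := hx
    have h := hterm x (hXS hxX) hxG
    by_contra hcon
    push_neg at hcon
    exact h ⟨hxI, hcon⟩
  -- the infeasible leftovers, via Hall's theorem
  set B := (X \ l.toFinset).filter (fun x => ¬ Ind (insert x l.toFinset)) with hBdef
  have hBD : ∀ x ∈ B, x ∈ D l.length := by
    intro x hx
    rw [hBdef, Finset.mem_filter, Finset.mem_sdiff] at hx
    rw [hD, Finset.mem_filter]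
    exact ⟨hx.1.1, Or.inr (by rw [hGk]; exact hx.2)⟩
  have hexist : ∀ x ∈ B, ∃ i, x ∈ D i := fun x hx => ⟨l.length, hBD x hx⟩
  set σ : α → ℕ := fun x => if h : ∃ i, x ∈ D i then Nat.find h else 0 with hσ
  have hσmem : ∀ x ∈ B, x ∈ D (σ x) := by
    intro x hx
    have h := hexist x hx
    rw [hσ]; simp only [dif_pos h]
    exact Nat.find_spec h
  have hσle : ∀ x ∈ B, σ x ≤ l.length := by
    intro x hx
    have h := hexist x hx
    rw [hσ]; simp only [dif_pos h]
    exact Nat.find_le (hBD x hx)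
  have hσmin : ∀ x ∈ B, ∀ j, j < σ x → x ∉ D j := by
    intro x hx j hj
    have h := hexist x hx
    rw [hσ] at hj; simp only [dif_pos h] at hj
    exact Nat.find_min h hj
  have hσpos : ∀ x ∈ B, 0 < σ x := by
    intro x hx
    rcases Nat.eq_zero_or_pos (σ x) with h0 | h
    · exfalso
      have hm := hσmem x hx
      rw [h0, hD, Finset.mem_filter] at hm
      rcases hm.2 with h1 | h1
      · rw [hG0] at h1; exact absurd h1 (Finset.notMem_empty x)
      · apply h1
        rw [hG0]
        apply hIdown _ X hX
        intro y hy
        rw [Finset.mem_insert] at hy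
        rcases hy with rfl | hy
        · rw [hBdef, Finset.mem_filter, Finset.mem_sdiff] at hx
          exact hx.1.1
        · exact absurd hy (Finset.notMem_empty y)
    · exact h
  -- Hall's condition and the injection
  have hall : ∃ π : {x // x ∈ B} → ℕ, Function.Injective π ∧
      ∀ x : {x // x ∈ B}, π x ∈ Finset.range (σ ↑x) := by
    rw [← Finset.all_card_le_biUnion_card_iff_exists_injective]
    intro s
    rcases s.eq_empty_or_nonempty with rfl | hs
    · simp
    · have hMk : s.sup (fun x => σ ↑x) ≤ l.length :=
        Finset.sup_le (fun x hx => hσle ↑x x.2)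
      have hbi : s.biUnion (fun x => Finset.range (σ ↑x)) =
          Finset.range (s.sup (fun x => σ ↑x)) := by
        ext n
        simp only [Finset.mem_biUnion, Finset.mem_range]
        rw [Finset.lt_sup_iff]
      rw [hbi, Finset.card_range]
      have hsub2 : Finset.image Subtype.val s ⊆ D (s.sup (fun x => σ ↑x)) := by
        intro y hy
        rw [Finset.mem_image] at hy
        obtain ⟨x, hxs, rfl⟩ := hy
        exact hDmono (Finset.le_sup hxs) (hσmem ↑x x.2)
      calc s.card = (Finset.image Subtype.val s).card :=
            (Finset.card_image_of_injective s Subtype.val_injective).symm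
        _ ≤ (D (s.sup (fun x => σ ↑x))).card := Finset.card_le_card hsub2
        _ ≤ s.sup (fun x => σ ↑x) := hDcard _ hMk
  obtain ⟨π, hπinj, hπmem⟩ := hall
  have hπk : ∀ x : {x // x ∈ B}, π x < l.length := by
    intro x
    exact lt_of_lt_of_le (Finset.mem_range.mp (hπmem x)) (hσle ↑x x.2)
  -- each infeasible leftover's gain is bounded by a distinct greedy gain
  have hbound : ∀ x : {x // x ∈ B},
      f (insert ↑x l.toFinset) - f l.toFinset ≤
      f (l.take (π x + 1)).toFinset - f (l.take (π x)).toFinset := by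
    intro x
    have hxB := x.2
    have hπlt : π x < σ ↑x := Finset.mem_range.mp (hπmem x)
    have hnD : (↑x : α) ∉ D (π x) := hσmin ↑x hxB (π x) hπlt
    rw [hD, Finset.mem_filter] at hnD
    push_neg at hnD
    have hxmem := Finset.mem_filter.mp hxB
    have hxsd := Finset.mem_sdiff.mp hxmem.1
    obtain ⟨hnG, hInd⟩ := hnD hxsd.1
    have hstep' := (hstep (π x) (hπk x)).2.2.2.2 ↑x (hXS hxsd.1) hnG hInd
    have hmarg' := hmarg (l.take (π x)).toFinset l.toFinset ↑x
      (by rw [← hGk]; exact hGmono (le_of_lt (hπk x))) hxsd.2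
    rw [hGsucc (π x) (hπk x)]
    linarith
  -- telescoping: the total greedy gain is f(greedy)
  have htel : ∑ i ∈ Finset.range l.length,
      (f (l.take (i+1)).toFinset - f (l.take i).toFinset) = f l.toFinset := by
    rw [Finset.sum_range_sub (fun i => f (l.take i).toFinset) l.length]
    rw [hGk, hG0, hf0, sub_zero]
  have hgainpos : ∀ i ∈ Finset.range l.length,
      0 ≤ f (l.take (i+1)).toFinset - f (l.take i).toFinset := by
    intro i hi
    have hi' := Finset.mem_range.mp hi
    have := (hstep i hi').2.2.2.1
    rw [hGsucc i hi']
    linarith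
  -- sum over B of gains
  have hBsum : ∑ x ∈ B, (f (insert x l.toFinset) - f l.toFinset) ≤ f l.toFinset := by
    rw [← Finset.sum_attach B (fun x => f (insert x l.toFinset) - f l.toFinset)]
    have h1 : ∑ x ∈ B.attach, (f (insert ↑x l.toFinset) - f l.toFinset)
        ≤ ∑ x ∈ B.attach, (f (l.take (π x + 1)).toFinset - f (l.take (π x)).toFinset) :=
      Finset.sum_le_sum (fun x _ => hbound x)
    have h2 : ∑ x ∈ B.attach, (f (l.take (π x + 1)).toFinset - f (l.take (π x)).toFinset)
        = ∑ i ∈ B.attach.image π, (f (l.take (i+1)).toFinset - f (l.take i).toFinset) :=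
      (Finset.sum_image (f := fun i => f (l.take (i+1)).toFinset - f (l.take i).toFinset)
        (g := π) (s := B.attach) (fun x _ y _ h => hπinj h)).symm
    have h3 : B.attach.image π ⊆ Finset.range l.length := by
      intro i hi
      rw [Finset.mem_image] at hi
      obtain ⟨x, _, rfl⟩ := hi
      exact Finset.mem_range.mpr (hπk x)
    have h4 : ∑ i ∈ B.attach.image π, (f (l.take (i+1)).toFinset - f (l.take i).toFinset)
        ≤ ∑ i ∈ Finset.range l.length, (f (l.take (i+1)).toFinset - f (l.take i).toFinset) :=
      Finset.sum_le_sum_of_subset_of_nonneg h3 (fun i hi _ => hgainpos i hi)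
    rw [htel] at h4
    linarith
  rw [hBdef] at hBsum
  linarith
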